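/- arXiv:1605.07042 — 3 statements merged into one kernel-verified Lean document; each statement's English description precedes it below -/
import Mathlib

section
/- Consider the continuous-time Markov chain on {(x₁,x₂) ∈ ℤ²_{≥0} : x₁ + 2x₂ = s} with transitions (x₁,x₂) → (x₁−2, x₂+1) at rate κ₁θ₁(x₁) and (x₁,x₂) → (x₁+2, x₂−1) at rate κ₂θ₂(x₂), where θ₁(x₁)=0 iff x₁ ≤ 1 and θ₂(x₂)=0 iff x₂=0. If (c₁,c₂) ∈ ℝ²_{>0} satisfies κ₁c₁² = κ₂c₂, then the measure π(x₁,x₂) = c₁^{x₁} c₂^{x₂} / (∏_{j=0}^{⌊x₁/2⌋−1} θ₁(x₁−2j) · ∏_{j=0}^{x₂−1} θ₂(x₂−j)) satisfies the stationarity (global balance) equations for the chain. -/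
/-! Complex balance of the dimerization network is detailed balance here: the unique reaction pair
gives `κ₁ θ₁(x₁+2) π(x₁+2, x₂) = κ₂ θ₂(x₂+1) π(x₁, x₂+1)`, since passing from one state to the
other peels off the first factor of each product in the denominator of `π` and multiplies the
numerator by `c₂ / c₁²`. Each inflow term of the master equation then equals the opposite outflow
term at `x`; the boundary cases vanish because `θ₂ 0 = 0` and `θ₁ x₁ = 0` for `x₁ ≤ 1`. -/

open Finset

namespace Finset

theorem prod_range_half_add_two {M : Type*} [CommMonoid M] (f : ℕ → M) (n : ℕ) :
    ∏ j ∈ range ((n + 2) / 2), f (n + 2 - 2 * j) =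
      f (n + 2) * ∏ j ∈ range (n / 2), f (n - 2 * j) := by
  rw [show (n + 2) / 2 = n / 2 + 1 by omega, prod_range_succ']
  simp only [mul_zero, Nat.sub_zero, mul_comm (f (n + 2))]
  congr 1
  exact prod_congr rfl fun j _ => congrArg f (by omega)

theorem prod_range_succ_sub {M : Type*} [CommMonoid M] (f : ℕ → M) (n : ℕ) :
    ∏ j ∈ range (n + 1), f (n + 1 - j) = f (n + 1) * ∏ j ∈ range n, f (n - j) := by
  rw [prod_range_succ', Nat.sub_zero, mul_comm]
  congr 1
  exact prod_congr rfl fun j _ => congrArg f (by omega)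

end Finset

section Dimerization

variable {K : Type*} [Field K]

def dimerMeasure (θ₁ θ₂ : ℕ → K) (c₁ c₂ : K) (x₁ x₂ : ℕ) : K :=
  c₁ ^ x₁ * c₂ ^ x₂ /
    ((∏ j ∈ range (x₁ / 2), θ₁ (x₁ - 2 * j)) * ∏ j ∈ range x₂, θ₂ (x₂ - j))

theorem dimerMeasure_detailed_balance {κ₁ κ₂ c₁ c₂ : K} (θ₁ θ₂ : ℕ → K)
    (hcb : κ₁ * c₁ ^ 2 = κ₂ * c₂) {x₁ x₂ : ℕ} (h₁ : θ₁ (x₁ + 2) ≠ 0) (h₂ : θ₂ (x₂ + 1) ≠ 0) :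
    κ₁ * θ₁ (x₁ + 2) * dimerMeasure θ₁ θ₂ c₁ c₂ (x₁ + 2) x₂ =
      κ₂ * θ₂ (x₂ + 1) * dimerMeasure θ₁ θ₂ c₁ c₂ x₁ (x₂ + 1) := by
  unfold dimerMeasure
  rw [prod_range_half_add_two, prod_range_succ_sub]
  generalize ∏ j ∈ range (x₁ / 2), θ₁ (x₁ - 2 * j) = P₁
  generalize ∏ j ∈ range x₂, θ₂ (x₂ - j) = P₂
  field_simp
  linear_combination c₁ ^ x₁ * c₂ ^ x₂ / (P₁ * P₂) * hcb

end Dimerization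

theorem stmt_3_general (κ₁ κ₂ : ℝ)
    (θ₁ θ₂ : ℕ → ℝ)
    (hθ₁ : ∀ z, θ₁ z = 0 ↔ z ≤ 1) (hθ₂ : ∀ z, θ₂ z = 0 ↔ z = 0)
    (c₁ c₂ : ℝ) (hcb : κ₁ * c₁ ^ 2 = κ₂ * c₂)
    (s : ℕ)
    (π : ℕ → ℕ → ℝ)
    (hπ : ∀ x₁ x₂, π x₁ x₂ = c₁ ^ x₁ * c₂ ^ x₂ /
      ((∏ j ∈ Finset.range (x₁ / 2), θ₁ (x₁ - 2 * j)) *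
       (∏ j ∈ Finset.range x₂, θ₂ (x₂ - j)))) :
    ∀ x₁ x₂ : ℕ, x₁ + 2 * x₂ = s →
      κ₁ * θ₁ (x₁ + 2) * π (x₁ + 2) (x₂ - 1) * (if 1 ≤ x₂ then 1 else 0) +
        κ₂ * θ₂ (x₂ + 1) * π (x₁ - 2) (x₂ + 1) * (if 2 ≤ x₁ then 1 else 0) =
      (κ₁ * θ₁ x₁ + κ₂ * θ₂ x₂) * π x₁ x₂ := by
  intro x₁ x₂ _
  obtain rfl : π = dimerMeasure θ₁ θ₂ c₁ c₂ := funext₂ hπ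
  have balance (y₁ y₂ : ℕ) := dimerMeasure_detailed_balance θ₁ θ₂ hcb
    (x₁ := y₁) (x₂ := y₂) (by rw [Ne, hθ₁]; omega) (by rw [Ne, hθ₂]; omega)
  have inflow_forward : κ₁ * θ₁ (x₁ + 2) * dimerMeasure θ₁ θ₂ c₁ c₂ (x₁ + 2) (x₂ - 1) *
      (if 1 ≤ x₂ then 1 else 0) = κ₂ * θ₂ x₂ * dimerMeasure θ₁ θ₂ c₁ c₂ x₁ x₂ := by
    rcases x₂ with _ | x₂
    · simp [(hθ₂ 0).mpr rfl]
    · simpa using balance x₁ x₂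
  have inflow_backward : κ₂ * θ₂ (x₂ + 1) * dimerMeasure θ₁ θ₂ c₁ c₂ (x₁ - 2) (x₂ + 1) *
      (if 2 ≤ x₁ then 1 else 0) = κ₁ * θ₁ x₁ * dimerMeasure θ₁ θ₂ c₁ c₂ x₁ x₂ := by
    by_cases hx₁ : 2 ≤ x₁
    · obtain ⟨x₁, rfl⟩ := Nat.exists_eq_add_of_le' hx₁
      simpa using (balance x₁ x₂).symm
    · simp [(hθ₁ x₁).mpr (by omega), hx₁]
  linear_combination inflow_forward + inflow_backward

theorem stmt_3 (κ₁ κ₂ : ℝ) (hκ₁ : 0 < κ₁) (hκ₂ : 0 < κ₂)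
    (θ₁ θ₂ : ℕ → ℝ) (hθ₁_nonneg : ∀ z, 0 ≤ θ₁ z) (hθ₂_nonneg : ∀ z, 0 ≤ θ₂ z)
    (hθ₁ : ∀ z, θ₁ z = 0 ↔ z ≤ 1) (hθ₂ : ∀ z, θ₂ z = 0 ↔ z = 0)
    (c₁ c₂ : ℝ) (hc₁ : 0 < c₁) (hc₂ : 0 < c₂) (hcb : κ₁ * c₁ ^ 2 = κ₂ * c₂)
    (s : ℕ)
    (π : ℕ → ℕ → ℝ)
    (hπ : ∀ x₁ x₂, π x₁ x₂ = c₁ ^ x₁ * c₂ ^ x₂ /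
      ((∏ j ∈ Finset.range (x₁ / 2), θ₁ (x₁ - 2 * j)) *
       (∏ j ∈ Finset.range x₂, θ₂ (x₂ - j)))) :
    ∀ x₁ x₂ : ℕ, x₁ + 2 * x₂ = s →
      κ₁ * θ₁ (x₁ + 2) * π (x₁ + 2) (x₂ - 1) * (if 1 ≤ x₂ then 1 else 0) +
        κ₂ * θ₂ (x₂ + 1) * π (x₁ - 2) (x₂ + 1) * (if 2 ≤ x₁ then 1 else 0) =
      (κ₁ * θ₁ x₁ + κ₂ * θ₂ x₂) * π x₁ x₂ :=
  stmt_3_general κ₁ κ₂ θ₁ θ₂ hθ₁ hθ₂ c₁ c₂ hcb s π hπ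
end

section
/- Consider the continuous-time Markov chain on ℤ²_{≥0} with transitions: (x₁,x₂)→(x₁−2,x₂) at rate κ₁θ(x₁), (x₁,x₂)→(x₁+2,x₂) at rate κ₂, (x₁,x₂)→(x₁−1,x₂+1) at rate κ₃φ(x₁), (x₁,x₂)→(x₁+1,x₂−1) at rate κ₄x₂, where θ(z)=0 iff z≤1, φ(0)=0, φ(1)=C>0, and φ(n)φ(n−1)=θ(n) for n≥2. If c₁ = √(κ₂/κ₁) and c₂ = (κ₃/κ₄)c₁, then π(x₁,x₂) = c₁^{x₁}/(∏_{j=1}^{x₁}φ(j)) · c₂^{x₂}/x₂! satisfies the global balance equations for this chain. -/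
/-!
The measure is detailed balanced: each reaction is balanced against its reverse on its own,
`κ₁ θ(n+2) π(n+2, m) = κ₂ π(n, m)` and `κ₃ φ(n+1) π(n+1, m) = κ₄ (m+1) π(n, m+1)`. Both follow
from the one-step ratios `φ(n+1) π(n+1, m) = c₁ π(n, m)` and `(m+1) π(n, m+1) = c₂ π(n, m)`
together with `θ(n+2) = φ(n+2) φ(n+1)`, `κ₁ c₁² = κ₂` and `κ₃ c₁ = κ₄ c₂`. Summing the two
detailed balance identities over the four reactions gives global balance; the boundary indicators
are matched by `θ 0 = θ 1 = φ 0 = 0`.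
-/

open Finset

lemma ne_zero_of_mul_pred_eq {K : Type*} [MulZeroClass K] {θ φ : ℕ → K}
    (hθ : ∀ n, 2 ≤ n → θ n ≠ 0) (hφrec : ∀ n, 2 ≤ n → φ n * φ (n - 1) = θ n)
    {n : ℕ} (hn : 1 ≤ n) : φ n ≠ 0 := by
  have h := hφrec (n + 1) (by omega)
  rw [Nat.add_sub_cancel] at h
  exact right_ne_zero_of_mul (h ▸ hθ (n + 1) (by omega))

lemma mul_pow_div_prod_Icc_succ {K : Type*} [Field K] (c : K) (φ : ℕ → K) (n : ℕ)
    (h : φ (n + 1) ≠ 0) :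
    φ (n + 1) * (c ^ (n + 1) / ∏ j ∈ Icc 1 (n + 1), φ j) = c * (c ^ n / ∏ j ∈ Icc 1 n, φ j) := by
  rw [prod_Icc_succ_top (by omega), pow_succ, ← div_mul_div_comm]
  field_simp

lemma succ_mul_pow_div_factorial_succ {K : Type*} [Field K] [CharZero K] (c : K) (n : ℕ) :
    (n + 1) * (c ^ (n + 1) / (n + 1).factorial) = c * (c ^ n / n.factorial) := by
  rw [Nat.factorial_succ, Nat.cast_mul, Nat.cast_add_one, pow_succ, mul_comm (n + 1 : K),
    ← div_mul_div_comm]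
  field_simp

section ProductForm

variable {K : Type*} [CommRing K] {κ₁ κ₂ κ₃ κ₄ c₁ c₂ : K} {θ φ f g : ℕ → K}

lemma detailed_balance_dimerization (hθφ : ∀ n, θ (n + 2) = φ (n + 2) * φ (n + 1))
    (hf : ∀ n, φ (n + 1) * f (n + 1) = c₁ * f n) (hκ : κ₁ * c₁ ^ 2 = κ₂) (n : ℕ) :
    κ₁ * θ (n + 2) * f (n + 2) = κ₂ * f n := by
  calc κ₁ * θ (n + 2) * f (n + 2) = κ₁ * φ (n + 1) * (φ (n + 2) * f (n + 2)) := by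
        rw [hθφ]; ring
    _ = κ₁ * c₁ * (φ (n + 1) * f (n + 1)) := by rw [hf]; ring
    _ = κ₂ * f n := by rw [hf, ← hκ]; ring

lemma detailed_balance_conversion (hf : ∀ n, φ (n + 1) * f (n + 1) = c₁ * f n)
    (hg : ∀ m : ℕ, ((m : K) + 1) * g (m + 1) = c₂ * g m) (hκ : κ₃ * c₁ = κ₄ * c₂) (n m : ℕ) :
    κ₃ * φ (n + 1) * (f (n + 1) * g m) = κ₄ * (m + 1) * (f n * g (m + 1)) := by
  calc κ₃ * φ (n + 1) * (f (n + 1) * g m) = κ₃ * (φ (n + 1) * f (n + 1)) * g m := by ring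
    _ = κ₄ * ((m + 1) * g (m + 1)) * f n := by rw [hf, hg]; linear_combination f n * g m * hκ
    _ = κ₄ * (m + 1) * (f n * g (m + 1)) := by ring

theorem global_balance_of_product_form (π : ℕ → ℕ → K) (hπ : ∀ a b, π a b = f a * g b)
    (hθ : ∀ n, n ≤ 1 → θ n = 0) (hθφ : ∀ n, θ (n + 2) = φ (n + 2) * φ (n + 1)) (hφ0 : φ 0 = 0)
    (hf : ∀ n, φ (n + 1) * f (n + 1) = c₁ * f n)
    (hg : ∀ m : ℕ, ((m : K) + 1) * g (m + 1) = c₂ * g m)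
    (hκ₁₂ : κ₁ * c₁ ^ 2 = κ₂) (hκ₃₄ : κ₃ * c₁ = κ₄ * c₂) (x₁ x₂ : ℕ) :
    κ₁ * θ (x₁ + 2) * π (x₁ + 2) x₂ +
        κ₂ * π (x₁ - 2) x₂ * (if 2 ≤ x₁ then 1 else 0) +
        κ₃ * φ (x₁ + 1) * π (x₁ + 1) (x₂ - 1) * (if 1 ≤ x₂ then 1 else 0) +
        κ₄ * (x₂ + 1) * π (x₁ - 1) (x₂ + 1) * (if 1 ≤ x₁ then 1 else 0) =
      (κ₁ * θ x₁ + κ₂ + κ₃ * φ x₁ + κ₄ * x₂) * π x₁ x₂ := by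
  have dimer := detailed_balance_dimerization hθφ hf hκ₁₂
  have conv := detailed_balance_conversion hf hg hκ₃₄
  simp only [hπ]
  have inflow₁ : κ₁ * θ (x₁ + 2) * (f (x₁ + 2) * g x₂) = κ₂ * (f x₁ * g x₂) := by
    rw [← mul_assoc, dimer, mul_assoc]
  have inflow₂ : κ₂ * (f (x₁ - 2) * g x₂) * (if 2 ≤ x₁ then 1 else 0)
      = κ₁ * θ x₁ * (f x₁ * g x₂) := by
    split_ifs with hx
    · obtain ⟨n, rfl⟩ := Nat.exists_eq_add_of_le' hx
      rw [Nat.add_sub_cancel, mul_one, ← mul_assoc, ← dimer, mul_assoc]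
    · rw [hθ x₁ (by omega)]; ring
  have inflow₃ : κ₃ * φ (x₁ + 1) * (f (x₁ + 1) * g (x₂ - 1)) * (if 1 ≤ x₂ then 1 else 0)
      = κ₄ * x₂ * (f x₁ * g x₂) := by
    split_ifs with hx
    · obtain ⟨m, rfl⟩ := Nat.exists_eq_add_of_le' hx
      rw [Nat.add_sub_cancel, mul_one, conv, Nat.cast_add_one]
    · obtain rfl : x₂ = 0 := by omega
      simp
  have inflow₄ : κ₄ * (x₂ + 1) * (f (x₁ - 1) * g (x₂ + 1)) * (if 1 ≤ x₁ then 1 else 0)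
      = κ₃ * φ x₁ * (f x₁ * g x₂) := by
    split_ifs with hx
    · obtain ⟨n, rfl⟩ := Nat.exists_eq_add_of_le' hx
      rw [Nat.add_sub_cancel, mul_one, conv]
    · obtain rfl : x₁ = 0 := by omega
      simp [hφ0]
  rw [inflow₁, inflow₂, inflow₃, inflow₄]
  ring

end ProductForm

theorem stmt_8_general (κ₁ κ₂ κ₃ κ₄ : ℝ)
    (hκ₁ : 0 < κ₁) (hκ₂ : 0 < κ₂) (hκ₄ : 0 < κ₄)
    (θ : ℕ → ℝ) (hθ : ∀ z, θ z = 0 ↔ z ≤ 1)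
    (φ : ℕ → ℝ) (hφ0 : φ 0 = 0)
    (hφrec : ∀ n, 2 ≤ n → φ n * φ (n - 1) = θ n)
    (c₁ c₂ : ℝ) (hc₁ : c₁ = Real.sqrt (κ₂ / κ₁)) (hc₂ : c₂ = (κ₃ / κ₄) * c₁)
    (π : ℕ → ℕ → ℝ)
    (hπ : ∀ x₁ x₂, π x₁ x₂ =
      c₁ ^ x₁ / (∏ j ∈ Finset.Icc 1 x₁, φ j) * (c₂ ^ x₂ / (Nat.factorial x₂))) :
    ∀ x₁ x₂ : ℕ,
      κ₁ * θ (x₁ + 2) * π (x₁ + 2) x₂ +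
        κ₂ * π (x₁ - 2) x₂ * (if 2 ≤ x₁ then 1 else 0) +
        κ₃ * φ (x₁ + 1) * π (x₁ + 1) (x₂ - 1) * (if 1 ≤ x₂ then 1 else 0) +
        κ₄ * (x₂ + 1) * π (x₁ - 1) (x₂ + 1) * (if 1 ≤ x₁ then 1 else 0) =
      (κ₁ * θ x₁ + κ₂ + κ₃ * φ x₁ + κ₄ * x₂) * π x₁ x₂ := by
  have hφ : ∀ n, 1 ≤ n → φ n ≠ 0 := fun n =>
    ne_zero_of_mul_pred_eq (fun n hn h => absurd ((hθ n).1 h) (by omega)) hφrec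
  have hθφ (n : ℕ) : θ (n + 2) = φ (n + 2) * φ (n + 1) := (hφrec (n + 2) (by omega)).symm
  have hκ₁₂ : κ₁ * c₁ ^ 2 = κ₂ := by
    rw [hc₁, Real.sq_sqrt (by positivity), mul_div_cancel₀ _ hκ₁.ne']
  have hκ₃₄ : κ₃ * c₁ = κ₄ * c₂ := by
    rw [hc₂, ← mul_assoc, mul_div_cancel₀ _ hκ₄.ne']
  exact global_balance_of_product_form π hπ (fun n hn => (hθ n).2 hn) hθφ hφ0
    (fun n => mul_pow_div_prod_Icc_succ c₁ φ n (hφ (n + 1) (by omega)))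
    (succ_mul_pow_div_factorial_succ c₂) hκ₁₂ hκ₃₄

theorem stmt_8 (κ₁ κ₂ κ₃ κ₄ C : ℝ)
    (hκ₁ : 0 < κ₁) (hκ₂ : 0 < κ₂) (hκ₃ : 0 < κ₃) (hκ₄ : 0 < κ₄) (hC : 0 < C)
    (θ : ℕ → ℝ) (hθ_nonneg : ∀ z, 0 ≤ θ z) (hθ : ∀ z, θ z = 0 ↔ z ≤ 1)
    (φ : ℕ → ℝ) (hφ0 : φ 0 = 0) (hφ1 : φ 1 = C)
    (hφrec : ∀ n, 2 ≤ n → φ n * φ (n - 1) = θ n)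
    (c₁ c₂ : ℝ) (hc₁ : c₁ = Real.sqrt (κ₂ / κ₁)) (hc₂ : c₂ = (κ₃ / κ₄) * c₁)
    (π : ℕ → ℕ → ℝ)
    (hπ : ∀ x₁ x₂, π x₁ x₂ =
      c₁ ^ x₁ / (∏ j ∈ Finset.Icc 1 x₁, φ j) * (c₂ ^ x₂ / (Nat.factorial x₂))) :
    ∀ x₁ x₂ : ℕ,
      κ₁ * θ (x₁ + 2) * π (x₁ + 2) x₂ +
        κ₂ * π (x₁ - 2) x₂ * (if 2 ≤ x₁ then 1 else 0) +
        κ₃ * φ (x₁ + 1) * π (x₁ + 1) (x₂ - 1) * (if 1 ≤ x₂ then 1 else 0) +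
        κ₄ * (x₂ + 1) * π (x₁ - 1) (x₂ + 1) * (if 1 ≤ x₁ then 1 else 0) =
      (κ₁ * θ x₁ + κ₂ + κ₃ * φ x₁ + κ₄ * x₂) * π x₁ x₂ :=
  stmt_8_general κ₁ κ₂ κ₃ κ₄ hκ₁ hκ₂ hκ₄ θ hθ φ hφ0 hφrec c₁ c₂ hc₁ hc₂ π hπ
end

section
/- Generalized product-form theorem: let α_i ≥ 1 be integers dividing ν_{ki} for all reactions k, and let θ_i : ℕ → ℝ≥0 satisfy θ_i(z) = 0 iff z ≤ α_i − 1. Set λ_k(x) = κ_k ∏_i ∏_{j=0}^{ν_{ki}/α_i − 1} θ_i(x_i − jα_i), κ_k > 0. If c ∈ ℝ^d_{>0} is a complex-balanced equilibrium of the associated mass-action ODE, then π(x) = ∏_i c_i^{x_i}/∏_{j=0}^{⌊x_i/α_i⌋ − 1} θ_i(x_i − jα_i) satisfies the global balance equations ∑_k λ_k(x − ν'_k + ν_k)π(x − ν'_k + ν_k)𝟙{x − ν'_k + ν_k ≥ 0} = ∑_k λ_k(x)π(x) for all x ∈ ℤ^d_{≥0}. -/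
/-!
Write `P_m(x) = ∏_{j<m} θ(x - jα)`, so that `λ_k(x) = κ_k ∏_i P_{ν_{ki}/α_i}(x_i)` and
`π(x) = ∏_i c_i^{x_i} / P_{⌊x_i/α_i⌋}(x_i)`. Since `P_m(x)` vanishes exactly when `x < mα`,
and otherwise splits off the first `m` factors of the denominator of `π`, one gets
`λ_k(x) π(x) = κ_k c^{ν_k} π(x - ν_k) 𝟙{ν_k ≤ x}`. Both sides of the global balance equation
are thus sums `∑_k κ_k c^{ν_k} g(η_k)`, with `η_k = ν'_k` on the left, `η_k = ν_k` on the right and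
`g(η) = π(x - η) 𝟙{η ≤ x}`; grouping the reactions by complex, they agree by complex balance.
-/

open Finset

noncomputable def fallingProd (θ : ℕ → ℝ) (α m x : ℕ) : ℝ :=
  ∏ j ∈ range m, θ (x - j * α)

noncomputable def productFormWeight (θ : ℕ → ℝ) (α : ℕ) (c : ℝ) (x : ℕ) : ℝ :=
  c ^ x / fallingProd θ α (x / α) x

section OneSpecies

variable {θ : ℕ → ℝ} {α : ℕ}

theorem fallingProd_eq_zero (hθ : ∀ z, θ z = 0 ↔ z ≤ α - 1) {m x : ℕ} (hx : x < m * α) :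
    fallingProd θ α m x = 0 := by
  obtain ⟨m, rfl⟩ : ∃ n, m = n + 1 := Nat.exists_eq_succ_of_ne_zero (by rintro rfl; simp at hx)
  refine prod_eq_zero (mem_range.2 m.lt_succ_self) ((hθ _).2 ?_)
  rw [add_mul] at hx
  omega

theorem fallingProd_ne_zero (hα : 0 < α) (hθ : ∀ z, θ z = 0 ↔ z ≤ α - 1) {m x : ℕ}
    (hx : m * α ≤ x) :
    fallingProd θ α m x ≠ 0 := by
  refine prod_ne_zero_iff.2 fun j hj => ?_
  have : (j + 1) * α ≤ m * α := Nat.mul_le_mul_right α (mem_range.1 hj)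
  rw [add_mul] at this
  rw [Ne, hθ]
  omega

theorem fallingProd_div_eq_mul (hα : 0 < α) {m x : ℕ} (hx : m * α ≤ x) :
    fallingProd θ α (x / α) x =
      fallingProd θ α m x * fallingProd θ α ((x - m * α) / α) (x - m * α) := by
  have hdiv : x / α = m + (x - m * α) / α := by
    conv_lhs => rw [← Nat.sub_add_cancel hx]
    rw [Nat.add_mul_div_right _ _ hα, add_comm]
  rw [fallingProd, hdiv, prod_range_add]
  congr 1
  refine prod_congr rfl fun j _ => congrArg θ ?_
  rw [add_mul]
  omega

theorem fallingProd_mul_productFormWeight (hα : 0 < α) (hθ : ∀ z, θ z = 0 ↔ z ≤ α - 1)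
    (c : ℝ) (m x : ℕ) :
    fallingProd θ α m x * productFormWeight θ α c x =
      if m * α ≤ x then c ^ (m * α) * productFormWeight θ α c (x - m * α) else 0 := by
  split_ifs with hx
  · have hP := fallingProd_ne_zero hα hθ hx
    rw [productFormWeight, productFormWeight, fallingProd_div_eq_mul hα hx]
    obtain ⟨y, rfl⟩ := Nat.exists_eq_add_of_le hx
    rw [Nat.add_sub_cancel_left, pow_add]
    field_simp
  · rw [fallingProd_eq_zero hθ (not_le.1 hx), zero_mul]

end OneSpecies

theorem prod_fallingProd_mul_prod_productFormWeight {ι : Type*} [Fintype ι]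
    {θ : ι → ℕ → ℝ} {α : ι → ℕ} (hα : ∀ i, 0 < α i) (hθ : ∀ i z, θ i z = 0 ↔ z ≤ α i - 1)
    (c : ι → ℝ) {n : ι → ℕ} (hn : ∀ i, α i ∣ n i) (z : ι → ℕ) [Decidable (∀ i, n i ≤ z i)] :
    (∏ i, fallingProd (θ i) (α i) (n i / α i) (z i)) *
        ∏ i, productFormWeight (θ i) (α i) (c i) (z i) =
      (∏ i, c i ^ n i) *
        if ∀ i, n i ≤ z i then ∏ i, productFormWeight (θ i) (α i) (c i) (z i - n i) else 0 := by
  simp_rw [← prod_mul_distrib, fallingProd_mul_productFormWeight (hα _) (hθ _),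
    Nat.div_mul_cancel (hn _), Fintype.prod_ite_zero, prod_mul_distrib, ← mul_ite_zero]

theorem ite_le_add_tsub_ite {ι R : Type*} [Zero R] (f : (ι → ℕ) → R) (x a b : ι → ℕ)
    [Decidable (∀ i, b i ≤ x i + a i)] [Decidable (∀ i, a i ≤ x i + a i - b i)]
    [Decidable (∀ i, b i ≤ x i)] :
    (if ∀ i, b i ≤ x i + a i then
        (if ∀ i, a i ≤ x i + a i - b i then f (fun i => x i + a i - b i - a i) else 0)
      else 0) =
      if ∀ i, b i ≤ x i then f (fun i => x i - b i) else 0 := by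
  by_cases hb : ∀ i, b i ≤ x i
  · have hsub : (fun i => x i + a i - b i - a i) = fun i => x i - b i :=
      funext fun i => by have := hb i; omega
    rw [if_pos fun i => (hb i).trans le_self_add, if_pos fun i => by have := hb i; omega,
      if_pos hb, hsub]
  · rw [if_neg hb]
    split_ifs with hba hab
    · exact absurd (fun i => by have := hba i; have := hab i; omega) hb
    all_goals rfl

theorem sum_mul_comp_eq_of_sum_fiber_eq {ι β R : Type*} [Fintype ι] [DecidableEq β]
    [NonUnitalNonAssocSemiring R] (a : ι → R) (f f' : ι → β)
    (h : ∀ η, ∑ k ∈ univ.filter (fun k => f k = η), a k =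
      ∑ k ∈ univ.filter (fun k => f' k = η), a k) (g : β → R) :
    ∑ k, a k * g (f k) = ∑ k, a k * g (f' k) := by
  set S := univ.image f ∪ univ.image f'
  have hfiber : ∀ w : ι → β, (∀ k, w k ∈ S) →
      ∑ k, a k * g (w k) = ∑ η ∈ S, (∑ k ∈ univ.filter (fun k => w k = η), a k) * g η := by
    intro w hw
    rw [← sum_fiberwise_of_maps_to fun k _ => hw k]
    refine sum_congr rfl fun η _ => ?_
    rw [sum_mul]
    exact sum_congr rfl fun k hk => by rw [(mem_filter.1 hk).2]
  rw [hfiber f fun k => by simp [S], hfiber f' fun k => by simp [S]]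
  simp_rw [h]

theorem stmt_10_general (d K : ℕ)
    (ν ν' : Fin K → Fin d → ℕ)
    (α : Fin d → ℕ) (hα : ∀ i, 1 ≤ α i) (hdvd : ∀ k i, α i ∣ ν k i)
    (κ : Fin K → ℝ)
    (θ : Fin d → ℕ → ℝ)
    (hθ_zero : ∀ i z, θ i z = 0 ↔ z ≤ α i - 1)
    (c : Fin d → ℝ)
    (hcb : ∀ η : Fin d → ℕ,
      ∑ k ∈ Finset.univ.filter (fun k => ν k = η), κ k * ∏ i, c i ^ ν k i =
      ∑ k ∈ Finset.univ.filter (fun k => ν' k = η), κ k * ∏ i, c i ^ ν k i)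
    (lam : (Fin d → ℕ) → Fin K → ℝ)
    (hlam : ∀ z k, lam z k =
      κ k * ∏ i, ∏ j ∈ Finset.range (ν k i / α i), θ i (z i - j * α i))
    (π : (Fin d → ℕ) → ℝ)
    (hπ : ∀ z, π z = ∏ i, c i ^ z i /
      ∏ j ∈ Finset.range (z i / α i), θ i (z i - j * α i)) :
    ∀ x : Fin d → ℕ,
      (∑ k, if ∀ i, ν' k i ≤ x i + ν k i then
          lam (fun i => x i + ν k i - ν' k i) k * π (fun i => x i + ν k i - ν' k i)
        else 0) =
      ∑ k, lam x k * π x := by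
  intro x
  have hπ' : π = fun z => ∏ i, productFormWeight (θ i) (α i) (c i) (z i) := funext hπ
  have hrate : ∀ z k, lam z k * π z = κ k * (∏ i, c i ^ ν k i) *
      if ∀ i, ν k i ≤ z i then π (fun i => z i - ν k i) else 0 := fun z k => by
    simp only [hlam, hπ', mul_assoc]
    exact congrArg (κ k * ·) <|
      prod_fallingProd_mul_prod_productFormWeight hα hθ_zero c (hdvd k) z
  simp_rw [hrate, ← mul_ite_zero, ite_le_add_tsub_ite]
  exact (sum_mul_comp_eq_of_sum_fiber_eq _ ν ν' hcb
    fun η => if ∀ i, η i ≤ x i then π (fun i => x i - η i) else 0).symm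

theorem stmt_10 (d K : ℕ) (hd : 1 ≤ d)
    (ν ν' : Fin K → Fin d → ℕ)
    (α : Fin d → ℕ) (hα : ∀ i, 1 ≤ α i) (hdvd : ∀ k i, α i ∣ ν k i)
    (κ : Fin K → ℝ) (hκ : ∀ k, 0 < κ k)
    (θ : Fin d → ℕ → ℝ) (hθ_nonneg : ∀ i z, 0 ≤ θ i z)
    (hθ_zero : ∀ i z, θ i z = 0 ↔ z ≤ α i - 1)
    (c : Fin d → ℝ) (hc : ∀ i, 0 < c i)
    (hcb : ∀ η : Fin d → ℕ,
      ∑ k ∈ Finset.univ.filter (fun k => ν k = η), κ k * ∏ i, c i ^ ν k i =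
      ∑ k ∈ Finset.univ.filter (fun k => ν' k = η), κ k * ∏ i, c i ^ ν k i)
    (lam : (Fin d → ℕ) → Fin K → ℝ)
    (hlam : ∀ z k, lam z k =
      κ k * ∏ i, ∏ j ∈ Finset.range (ν k i / α i), θ i (z i - j * α i))
    (π : (Fin d → ℕ) → ℝ)
    (hπ : ∀ z, π z = ∏ i, c i ^ z i /
      ∏ j ∈ Finset.range (z i / α i), θ i (z i - j * α i)) :
    ∀ x : Fin d → ℕ,
      (∑ k, if ∀ i, ν' k i ≤ x i + ν k i then
          lam (fun i => x i + ν k i - ν' k i) k * π (fun i => x i + ν k i - ν' k i)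
        else 0) =
      ∑ k, lam x k * π x :=
  stmt_10_general d K ν ν' α hα hdvd κ θ hθ_zero c hcb lam hlam π hπ
end
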